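/- For all H ∈ (0,1) and K ∈ (0,1), y^{2−2HK}·h(y) converges to H²K(K−1) as y → ∞. Equivalently, as ε → 0+, 1 + (1−ε)^{2HK} − 2^{1−K}(1 + (1−ε)^{2H})^K = H²K(K−1)ε² + o(ε²). -/

import Mathlib

/-!
With `g = normalizedH H K`, i.e. `g(ε) = 1 + (1-ε)^{2HK} - 2^{1-K}(1 + (1-ε)^{2H})^K`, one has
`y^{2-2HK} h(y) = g(1/y) / (1/y)²`. The function `g` is smooth near `0` with
`g(0) = g'(0) = 0` and `g''(0) = 2H²K(K-1)`, so both claims follow from the second-order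
L'Hôpital limit `g(ε)/ε² → g''(0)/2`.
-/

open Filter Asymptotics Topology

theorem tendsto_div_sq_nhdsNE_of_hasDerivAt {f f' : ℝ → ℝ} {a c : ℝ}
    (hf : ∀ᶠ x in 𝓝 a, HasDerivAt f (f' x) x) (hfa : f a = 0) (hf'a : f' a = 0)
    (hf' : HasDerivAt f' c a) :
    Tendsto (fun x => f x / (x - a) ^ 2) (𝓝[≠] a) (𝓝 (c / 2)) := by
  have hsq : ∀ x, HasDerivAt (fun y => (y - a) ^ 2) (2 * (x - a)) x := fun x => by
    simpa using ((hasDerivAt_id x).sub_const a).fun_pow 2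
  refine HasDerivAt.lhopital_zero_nhdsNE (eventually_nhdsWithin_of_eventually_nhds hf)
    (.of_forall hsq) ?_ ?_ ?_ ?_
  · filter_upwards [self_mem_nhdsWithin] with x hx
    exact mul_ne_zero two_ne_zero (sub_ne_zero.2 hx)
  · simpa [hfa] using hf.self_of_nhds.continuousAt.tendsto.mono_left nhdsWithin_le_nhds
  · exact tendsto_nhdsWithin_of_tendsto_nhds (by simpa using (hsq a).continuousAt.tendsto)
  · have hslope := (hasDerivAt_iff_tendsto_slope.mp hf').div_const 2
    refine hslope.congr' (eventually_nhdsWithin_of_forall fun x _ => ?_)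
    rw [slope_def_field, hf'a, sub_zero, div_div, mul_comm]

theorem isLittleO_sub_mul_sq_of_hasDerivAt {f f' : ℝ → ℝ} {a c : ℝ}
    (hf : ∀ᶠ x in 𝓝 a, HasDerivAt f (f' x) x) (hfa : f a = 0) (hf'a : f' a = 0)
    (hf' : HasDerivAt f' c a) :
    (fun x => f x - c / 2 * (x - a) ^ 2) =o[𝓝[≠] a] fun x => (x - a) ^ 2 := by
  refine (isLittleO_iff_tendsto' ?_).2 ?_
  · filter_upwards [self_mem_nhdsWithin] with x hx h
    exact absurd (sub_eq_zero.1 (pow_eq_zero_iff two_ne_zero |>.1 h)) hx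
  · have := (tendsto_div_sq_nhdsNE_of_hasDerivAt hf hfa hf'a hf').sub_const (c / 2)
    rw [sub_self] at this
    refine this.congr' (eventually_nhdsWithin_of_forall fun x hx => ?_)
    dsimp only
    rw [sub_div, mul_div_cancel_right₀ _ (pow_ne_zero 2 (sub_ne_zero.2 hx))]

theorem hasDerivAt_one_sub_rpow (p : ℝ) {x : ℝ} (hx : x < 1) :
    HasDerivAt (fun y => (1 - y) ^ p) (-(p * (1 - x) ^ (p - 1))) x := by
  simpa using ((hasDerivAt_id x).const_sub 1).rpow_const (p := p) (Or.inl (sub_pos.2 hx).ne')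

noncomputable def normalizedH (H K ε : ℝ) : ℝ :=
  1 + (1 - ε) ^ (2*H*K) - 2 ^ (1 - K) * (1 + (1 - ε) ^ (2*H)) ^ K

noncomputable def normalizedHDeriv (H K ε : ℝ) : ℝ :=
  2 ^ (1 - K) * (2*H*K) * (1 + (1 - ε) ^ (2*H)) ^ (K - 1) * (1 - ε) ^ (2*H - 1)
    - 2*H*K * (1 - ε) ^ (2*H*K - 1)

theorem normalizedH_zero (H K : ℝ) : normalizedH H K 0 = 0 := by
  have h2 : (2:ℝ) ^ (1 - K) * 2 ^ K = 2 := by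
    rw [← Real.rpow_add two_pos]
    norm_num
  simp only [normalizedH, sub_zero, Real.one_rpow, one_add_one_eq_two]
  linarith

theorem normalizedHDeriv_zero (H K : ℝ) : normalizedHDeriv H K 0 = 0 := by
  have h2 : (2:ℝ) ^ (1 - K) * 2 ^ (K - 1) = 1 := by
    rw [← Real.rpow_add two_pos]
    norm_num
  simp only [normalizedHDeriv, sub_zero, Real.one_rpow, mul_one]
  norm_num
  linear_combination (2*H*K) * h2

theorem hasDerivAt_normalizedH (H K : ℝ) {ε : ℝ} (hε : ε < 1) :
    HasDerivAt (normalizedH H K) (normalizedHDeriv H K ε) ε := by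
  have hpow := (hasDerivAt_one_sub_rpow (2*H) hε).const_add 1
  have hpos : 0 < 1 + (1 - ε) ^ (2*H) := by have := sub_pos.2 hε; positivity
  have hK := hpow.rpow_const (p := K) (Or.inl hpos.ne')
  refine (((hasDerivAt_one_sub_rpow (2*H*K) hε).const_add 1).sub
    (hK.const_mul (2 ^ (1 - K)))).congr_deriv ?_
  simp only [normalizedHDeriv]
  ring

theorem hasDerivAt_normalizedHDeriv_zero (H K : ℝ) :
    HasDerivAt (normalizedHDeriv H K) (2 * H^2 * K * (K - 1)) 0 := by
  have h01 : (0:ℝ) < 1 := one_pos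
  have hpow := (hasDerivAt_one_sub_rpow (2*H) h01).const_add 1
  have hK := hpow.rpow_const (p := K - 1) (Or.inl (by norm_num))
  refine (((hK.const_mul (2 ^ (1 - K) * (2*H*K))).mul (hasDerivAt_one_sub_rpow (2*H - 1) h01)).sub
    ((hasDerivAt_one_sub_rpow (2*H*K - 1) h01).const_mul (2*H*K))).congr_deriv ?_
  have h0 : (2:ℝ) ^ (1 - K) * 2 ^ (K - 1) = 1 := by rw [← Real.rpow_add two_pos]; norm_num
  have h1 : (2:ℝ) ^ (1 - K) * 2 ^ (K - 1 - 1) = 1 / 2 := by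
    rw [← Real.rpow_add two_pos]; norm_num
  simp only [sub_zero, Real.one_rpow, one_add_one_eq_two, mul_one]
  linear_combination (2*K*H - 4*K*H^2) * h0 + (4*K*H^2 - 4*K^2*H^2) * h1

theorem h_eq_rpow_mul_normalizedH (H K : ℝ) {y : ℝ} (hy : 1 ≤ y) :
    y ^ (2*H*K) + (y - 1) ^ (2*H*K) - (2 / 2 ^ K) * (y ^ (2*H) + (y - 1) ^ (2*H)) ^ K
      = y ^ (2*H*K) * normalizedH H K y⁻¹ := by
  have hy0 : 0 < y := zero_lt_one.trans_le hy
  have hsub : 0 ≤ 1 - y⁻¹ := sub_nonneg.2 (inv_le_one_of_one_le₀ hy)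
  have hmul : y * (1 - y⁻¹) = y - 1 := by field_simp
  have hlin : y ^ (2*H*K) * (1 - y⁻¹) ^ (2*H*K) = (y - 1) ^ (2*H*K) := by
    rw [← Real.mul_rpow hy0.le hsub, hmul]
  have hpow : y ^ (2*H*K) * (1 + (1 - y⁻¹) ^ (2*H)) ^ K = (y ^ (2*H) + (y - 1) ^ (2*H)) ^ K := by
    rw [Real.rpow_mul hy0.le, ← Real.mul_rpow (by positivity) (by positivity), mul_add, mul_one,
      ← Real.mul_rpow hy0.le hsub, hmul]
  have htwo : (2:ℝ) / 2 ^ K = 2 ^ (1 - K) := by rw [Real.rpow_sub two_pos, Real.rpow_one]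
  rw [normalizedH, htwo]
  linear_combination -hlin + 2 ^ (1 - K) * hpow

theorem bifBm_h_asymptotics_general (H K : ℝ) :
    Tendsto (fun y : ℝ =>
        y ^ (2 - 2*H*K) * (y ^ (2*H*K) + (y - 1) ^ (2*H*K)
          - (2 / 2 ^ K) * (y ^ (2*H) + (y - 1) ^ (2*H)) ^ K))
      atTop (nhds (H^2 * K * (K - 1)))
    ∧
    (fun ε : ℝ =>
        1 + (1 - ε) ^ (2*H*K) - 2 ^ (1 - K) * (1 + (1 - ε) ^ (2*H)) ^ K
          - H^2 * K * (K - 1) * ε^2)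
      =o[nhdsWithin 0 (Set.Ioi 0)] (fun ε : ℝ => ε^2) := by
  have hderiv : ∀ᶠ ε in 𝓝 0, HasDerivAt (normalizedH H K) (normalizedHDeriv H K ε) ε :=
    (eventually_lt_nhds one_pos).mono fun ε hε => hasDerivAt_normalizedH H K hε
  have hlim := tendsto_div_sq_nhdsNE_of_hasDerivAt hderiv (normalizedH_zero H K)
    (normalizedHDeriv_zero H K) (hasDerivAt_normalizedHDeriv_zero H K)
  have hlo := isLittleO_sub_mul_sq_of_hasDerivAt hderiv (normalizedH_zero H K)
    (normalizedHDeriv_zero H K) (hasDerivAt_normalizedHDeriv_zero H K)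
  have hc : 2 * H^2 * K * (K - 1) / 2 = H^2 * K * (K - 1) := by ring
  simp only [sub_zero, hc] at hlim hlo
  have hpunct : Set.Ioi (0:ℝ) ⊆ {0}ᶜ := fun ε hε => (Set.mem_Ioi.1 hε).ne'
  constructor
  · have hinv := tendsto_inv_atTop_nhdsGT_zero.mono_right (nhdsWithin_mono 0 hpunct)
    refine (hlim.comp hinv).congr' ?_
    filter_upwards [eventually_ge_atTop 1] with y hy
    have hy0 : 0 < y := zero_lt_one.trans_le hy
    rw [Function.comp_apply, h_eq_rpow_mul_normalizedH H K hy, ← mul_assoc,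
      ← Real.rpow_add hy0, sub_add_cancel, inv_pow, div_inv_eq_mul, mul_comm, Real.rpow_two]
  · exact hlo.mono (nhdsWithin_mono 0 hpunct)

/-- For `H ∈ (0,1)`, `K ∈ (0,1)`, `y^{2-2HK} · h(y) → H²K(K-1)` as `y → ∞`, where
`h(y) = y^{2HK} + (y-1)^{2HK} - (2/2^K)(y^{2H} + (y-1)^{2H})^K`; equivalently, as `ε → 0⁺`,
`1 + (1-ε)^{2HK} - 2^{1-K}(1 + (1-ε)^{2H})^K = H²K(K-1)ε² + o(ε²)`. -/
theorem bifBm_h_asymptotics (H K : ℝ) (hH : H ∈ Set.Ioo (0:ℝ) 1) (hK : K ∈ Set.Ioo (0:ℝ) 1) :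
    Tendsto (fun y : ℝ =>
        y ^ (2 - 2*H*K) * (y ^ (2*H*K) + (y - 1) ^ (2*H*K)
          - (2 / 2 ^ K) * (y ^ (2*H) + (y - 1) ^ (2*H)) ^ K))
      atTop (nhds (H^2 * K * (K - 1)))
    ∧
    (fun ε : ℝ =>
        1 + (1 - ε) ^ (2*H*K) - 2 ^ (1 - K) * (1 + (1 - ε) ^ (2*H)) ^ K
          - H^2 * K * (K - 1) * ε^2)
      =o[nhdsWithin 0 (Set.Ioi 0)] (fun ε : ℝ => ε^2) :=
  bifBm_h_asymptotics_general H K
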